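/- Let H ~ Hyp(n,i,k) with ik/n ∈ [m-1,m] for some m ∈ {2,...,min{i,k}-1}. Then (n/(2i(n-i)))·E|H - ik/n| ≥ (e^{-1/3}/(8√(2π)))·√(k/n)·√(n-k)/n. -/

import Mathlib

/-!
Write `i = m + b`, `k = m + c`, `n = m + b + c + d`: then `P(H = m)` is the probability of the
2 × 2 table `[[m, b], [c, d]]` given its margins. Telescoping gives
`∑_{j < m} (ik/n - j) P(H = j) = (m d / n) P(H = m)`, a lower bound for `E|H - ik/n|`.
Stirling's bounds `√(2πj) (j/e)^j ≤ j! ≤ e √j (j/e)^j` turn `log P(H = m)` into a `½ log` of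
cell and margin sizes minus `n` times the mutual information of the table. Every cell differs
from its expected count by `±δ`, `δ = m - ik/n = (md - bc)/n ∈ [0, 1]`, so the tangent lines of
`x log x` bound that mutual-information term by `δ log (md/(bc)) ≤ log (md/(bc))`. What remains
is the counting inequality `i (n - i) · m d ≤ 8 n² b c` and a numerical check.
-/

/-- The hypergeometric probability `P(H = m)` for `H ~ Hyp(n,i,k)`. -/
noncomputable def hypPMF (n i k m : ℕ) : ℝ :=
  (Nat.choose i m * Nat.choose (n - i) (k - m)) / (Nat.choose n k)

/-- The mean absolute deviation `E|H - ik/n|` of `H ~ Hyp(n,i,k)`. -/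
noncomputable def hypMAD (n i k : ℕ) : ℝ :=
  ∑ m ∈ Finset.range (k + 1), |(m : ℝ) - (i : ℝ) * k / n| * hypPMF n i k m

open Real Finset
open scoped Nat

lemma cast_sub_mul_choose (a r : ℕ) : ((a : ℝ) - r) * a.choose r = (r + 1) * a.choose (r + 1) := by
  rcases le_or_gt r a with h | h
  · have := congrArg (Nat.cast : ℕ → ℝ) (Nat.choose_succ_right_eq a r)
    push_cast [Nat.cast_sub h] at this
    linarith
  · simp [Nat.choose_eq_zero_of_lt h, Nat.choose_eq_zero_of_lt (Nat.lt_succ_of_lt h)]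

/-- The summand is `T (j + 1) - T j` for `T j = j (b + j - k) C(a, j) C(b, k - j)`. -/
lemma sum_range_mul_choose_mul_choose (a b k : ℕ) {M : ℕ} (hM : M ≤ k) :
    ∑ j ∈ range M, (a * ((k : ℝ) - j) - j * b) * a.choose j * b.choose (k - j)
      = M * ((b : ℝ) + M - k) * a.choose M * b.choose (k - M) := by
  induction M with
  | zero => simp
  | succ M ih =>
    rw [sum_range_succ, ih (by omega)]
    have ha := cast_sub_mul_choose a M
    have hb := cast_sub_mul_choose b (k - (M + 1))
    rw [show k - (M + 1) + 1 = k - M by omega] at hb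
    push_cast [Nat.cast_sub hM] at hb ⊢
    linear_combination ((b : ℝ) + M + 1 - k) * (b.choose (k - (M + 1)) : ℝ) * ha
      - ((a : ℝ) - M) * (a.choose M : ℝ) * hb

lemma hypPMF_nonneg (n i k j : ℕ) : 0 ≤ hypPMF n i k j := by
  unfold hypPMF; positivity

lemma sum_range_sub_mul_hypPMF {n i k M : ℕ} (hn : 0 < n) (hin : i ≤ n) (hM : M ≤ k) :
    ∑ j ∈ range M, ((i : ℝ) * k / n - j) * hypPMF n i k j
      = M * ((n : ℝ) + M - i - k) / n * hypPMF n i k M := by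
  have key := sum_range_mul_choose_mul_choose i (n - i) k hM
  rw [Nat.cast_sub hin] at key
  have hn' : (n : ℝ) ≠ 0 := by positivity
  have term : ∀ j, ((i : ℝ) * k / n - j) * hypPMF n i k j
      = (i * ((k : ℝ) - j) - j * ((n : ℝ) - i)) * i.choose j * (n - i).choose (k - j)
        / (n * n.choose k) := by
    intro j
    unfold hypPMF
    field_simp
    ring
  rw [sum_congr rfl fun j _ => term j, ← sum_div, key, hypPMF]
  field_simp
  ring

lemma mul_hypPMF_le_hypMAD {n i k M : ℕ} (hn : 0 < n) (hin : i ≤ n) (hM : M ≤ k) :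
    M * ((n : ℝ) + M - i - k) / n * hypPMF n i k M ≤ hypMAD n i k := by
  rw [← sum_range_sub_mul_hypPMF hn hin hM, hypMAD]
  calc _ ≤ ∑ j ∈ range M, |(j : ℝ) - i * k / n| * hypPMF n i k j :=
        sum_le_sum fun j _ => mul_le_mul_of_nonneg_right (abs_sub_comm (j : ℝ) _ ▸ le_abs_self _)
          (hypPMF_nonneg ..)
    _ ≤ _ := sum_le_sum_of_subset_of_nonneg (range_subset_range.2 (by omega))
        fun j _ _ => mul_nonneg (abs_nonneg _) (hypPMF_nonneg ..)

lemma hypPMF_table_eq (a b c d : ℕ) :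
    hypPMF (a + b + c + d) (a + b) (a + c) a
      = (a + b)! * (c + d)! * (a + c)! * (b + d)! / ((a + b + c + d)! * a ! * b ! * c ! * d !) := by
  rw [hypPMF, show a + b + c + d - (a + b) = c + d by omega, Nat.add_sub_cancel_left,
    Nat.cast_choose ℝ (by omega : a ≤ a + b), Nat.cast_choose ℝ (by omega : c ≤ c + d),
    Nat.cast_choose ℝ (by omega : a + c ≤ a + b + c + d), Nat.add_sub_cancel_left,
    Nat.add_sub_cancel_left, show a + b + c + d - (a + c) = b + d by omega]
  field_simp

namespace Stirling

lemma log_factorial_le_stirling {n : ℕ} (hn : n ≠ 0) :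
    log n ! ≤ n * log n - n + log n / 2 + 1 := by
  obtain ⟨l, rfl⟩ := Nat.exists_eq_succ_of_ne_zero hn
  have hs : stirlingSeq (l + 1) ≤ exp 1 / √2 := by
    simpa using stirlingSeq'_antitone (Nat.zero_le l)
  rw [stirlingSeq, div_le_iff₀ (by positivity)] at hs
  have hx : (0 : ℝ) < (l + 1 : ℕ) := by positivity
  calc log (l + 1)! ≤ log (exp 1 * √((l + 1 : ℕ) : ℝ) * (((l + 1 : ℕ) : ℝ) / exp 1) ^ (l + 1)) := by
        refine log_le_log (by positivity) (hs.trans_eq ?_)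
        rw [sqrt_mul zero_le_two]
        field_simp
    _ = _ := by
        rw [log_mul (by positivity) (by positivity), log_mul (by positivity) (by positivity),
          log_exp, log_sqrt hx.le, log_pow, log_div hx.ne' (exp_ne_zero 1), log_exp]
        ring

end Stirling

lemma sub_mul_one_add_log_le {x y : ℝ} (hx : 0 < x) (hy : 0 < y) :
    (y - x) * (1 + log x) ≤ y * log y - x * log x := by
  have h := one_sub_inv_le_log_of_pos (div_pos hy hx)
  rw [log_div hy.ne' hx.ne', inv_div] at h
  have : y - x ≤ y * (log y - log x) :=
    calc y - x = y * (1 - x / y) := by field_simp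
      _ ≤ _ := mul_le_mul_of_nonneg_left h hy.le
  linarith

/-- `N · I(row; column)` for the 2 × 2 contingency table `[[a, b], [c, d]]` of total `N`,
`I` the mutual information. -/
noncomputable def scaledMutualInfo (a b c d : ℝ) : ℝ :=
  a * log a + b * log b + c * log c + d * log d + (a + b + c + d) * log (a + b + c + d)
    - ((a + b) * log (a + b) + (c + d) * log (c + d) + (a + c) * log (a + c)
      + (b + d) * log (b + d))

lemma scaledMutualInfo_eq {a b c d : ℝ} (ha : 0 < a) (hb : 0 < b) (hc : 0 < c) (hd : 0 < d) :
    let N := a + b + c + d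
    scaledMutualInfo a b c d
      = a * log a - (a + b) * (a + c) / N * log ((a + b) * (a + c) / N)
        + (b * log b - (a + b) * (b + d) / N * log ((a + b) * (b + d) / N))
        + (c * log c - (c + d) * (a + c) / N * log ((c + d) * (a + c) / N))
        + (d * log d - (c + d) * (b + d) / N * log ((c + d) * (b + d) / N)) := by
  intro N
  have hN : 0 < N := by positivity
  rw [scaledMutualInfo, log_div (by positivity) hN.ne', log_div (by positivity) hN.ne',
    log_div (by positivity) hN.ne', log_div (by positivity) hN.ne',
    log_mul (by positivity) (by positivity), log_mul (by positivity) (by positivity),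
    log_mul (by positivity) (by positivity), log_mul (by positivity) (by positivity)]
  field_simp
  ring

lemma scaledMutualInfo_le {a b c d : ℝ} (ha : 0 < a) (hb : 0 < b) (hc : 0 < c) (hd : 0 < d)
    (h₀ : b * c ≤ a * d) (h₁ : a * d ≤ b * c + (a + b + c + d)) :
    scaledMutualInfo a b c d ≤ log a + log d - log b - log c := by
  set N := a + b + c + d with hN_def
  have hN : 0 < N := by positivity
  set δ := (a * d - b * c) / N with hδ
  have hδ₀ : 0 ≤ δ := div_nonneg (by linarith) hN.le
  have hδ₁ : δ ≤ 1 := (div_le_one hN).2 (by linarith)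
  have e₁ : (a + b) * (a + c) / N = a - δ := by rw [hδ, hN_def]; field_simp; ring
  have e₂ : (a + b) * (b + d) / N = b + δ := by rw [hδ, hN_def]; field_simp; ring
  have e₃ : (c + d) * (a + c) / N = c + δ := by rw [hδ, hN_def]; field_simp; ring
  have e₄ : (c + d) * (b + d) / N = d - δ := by rw [hδ, hN_def]; field_simp; ring
  have t₁ := sub_mul_one_add_log_le ha (e₁ ▸ (by positivity : 0 < (a + b) * (a + c) / N))
  have t₂ := sub_mul_one_add_log_le hb (by positivity : 0 < b + δ)
  have t₃ := sub_mul_one_add_log_le hc (by positivity : 0 < c + δ)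
  have t₄ := sub_mul_one_add_log_le hd (e₄ ▸ (by positivity : 0 < (c + d) * (b + d) / N))
  have hw : 0 ≤ log a + log d - log b - log c := by
    have := log_le_log (by positivity) h₀
    rw [log_mul hb.ne' hc.ne', log_mul ha.ne' hd.ne'] at this
    linarith
  rw [scaledMutualInfo_eq ha hb hc hd, e₁, e₂, e₃, e₄]
  nlinarith [mul_le_mul_of_nonneg_right hδ₁ hw]

lemma table_count_le {a b c d : ℝ} (ha : 1 ≤ a) (hb : 1 ≤ b) (hc : 1 ≤ c) (hd : 1 ≤ d)
    (h : a * d ≤ b * c + (a + b + c + d)) :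
    (a + b) * (c + d) * (a * d) ≤ 8 * (a + b + c + d) ^ 2 * (b * c) := by
  set N := a + b + c + d
  rcases le_or_gt N (2 * (b * c)) with hN | hN
  · have e₁ : (a + b) * (c + d) ≤ N ^ 2 / 4 := by nlinarith [sq_nonneg (a + b - (c + d))]
    have e₂ : a * d ≤ 3 * (b * c) := by linarith
    nlinarith [mul_le_mul e₁ e₂ (by positivity) (by positivity)]
  · have e₁ : a * d ≤ 3 / 2 * N := by linarith
    have hbc : 1 ≤ b * c := one_le_mul_of_one_le_of_one_le hb hc
    have e₂ : (a + b) * (c + d) ≤ 5 * N * (b * c) := by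
      nlinarith [mul_le_mul (show a ≤ N by linarith) (show c ≤ b * c by nlinarith)
          (by positivity) (by positivity),
        mul_le_mul (show d ≤ N by linarith) (show b ≤ b * c by nlinarith)
          (by positivity) (by positivity)]
    nlinarith [mul_le_mul e₂ e₁ (by positivity) (by positivity),
      (by positivity : 0 ≤ N ^ 2 * (b * c))]

lemma log_table_count_le {a b c d : ℝ} (ha : 1 ≤ a) (hb : 1 ≤ b) (hc : 1 ≤ c) (hd : 1 ≤ d)
    (h : a * d ≤ b * c + (a + b + c + d)) :
    log (a + b) + log (c + d) + log a + log d
      ≤ 3 * log 2 + 2 * log (a + b + c + d) + log b + log c := by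
  have h := log_le_log (by positivity) (table_count_le ha hb hc hd h)
  rw [log_mul (by positivity) (by positivity), log_mul (by positivity) (by positivity),
    log_mul (by positivity) (by positivity), log_mul (by positivity) (by positivity),
    log_mul (by positivity) (by positivity), log_mul (by positivity) (by positivity), log_pow,
    show (8 : ℝ) = 2 ^ 3 by norm_num, log_pow] at h
  push_cast at h
  linarith

lemma log_two_mul_pi_gt : 7 / 4 < log (2 * π) := by
  rw [lt_log_iff_exp_lt (by positivity)]
  refine lt_of_pow_lt_pow_left₀ 4 (by positivity) ?_
  calc exp (7 / 4) ^ 4 = exp 1 ^ 7 := by rw [← exp_nat_mul, ← exp_nat_mul]; norm_num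
    _ < 2.7182818286 ^ 7 := by gcongr; exact exp_one_lt_d9
    _ < (2 * 3.14) ^ 4 := by norm_num
    _ < (2 * π) ^ 4 := by gcongr; exact pi_gt_d2

lemma log_hypPMF_table_ge {a b c d : ℕ} (ha : a ≠ 0) (hb : b ≠ 0) (hc : c ≠ 0) (hd : d ≠ 0) :
    2 * log (2 * π) - 5 + (log ((a : ℝ) + b) + log ((c : ℝ) + d) + log ((a : ℝ) + c)
        + log ((b : ℝ) + d) - log ((a : ℝ) + b + c + d) - log a - log b - log c - log d) / 2
      - scaledMutualInfo a b c d
      ≤ log (hypPMF (a + b + c + d) (a + b) (a + c) a) := by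
  have hf (j : ℕ) : ((j ! : ℕ) : ℝ) ≠ 0 := by positivity
  rw [hypPMF_table_eq, log_div (by positivity) (by positivity), log_mul (by positivity) (hf _),
    log_mul (by positivity) (hf _), log_mul (hf _) (hf _), log_mul (by positivity) (hf _),
    log_mul (by positivity) (hf _), log_mul (by positivity) (hf _), log_mul (hf _) (hf _)]
  have l₁ := Stirling.le_log_factorial_stirling (n := a + b) (by omega)
  have l₂ := Stirling.le_log_factorial_stirling (n := c + d) (by omega)
  have l₃ := Stirling.le_log_factorial_stirling (n := a + c) (by omega)
  have l₄ := Stirling.le_log_factorial_stirling (n := b + d) (by omega)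
  have u₀ := Stirling.log_factorial_le_stirling (n := a + b + c + d) (by omega)
  have u₁ := Stirling.log_factorial_le_stirling ha
  have u₂ := Stirling.log_factorial_le_stirling hb
  have u₃ := Stirling.log_factorial_le_stirling hc
  have u₄ := Stirling.log_factorial_le_stirling hd
  push_cast at l₁ l₂ l₃ l₄ u₀
  rw [scaledMutualInfo]
  linarith

lemma le_mul_hypPMF_table {a b c d : ℕ} (ha : a ≠ 0) (hb : b ≠ 0) (hc : c ≠ 0) (hd : d ≠ 0)
    (h₀ : (b : ℝ) * c ≤ a * d) (h₁ : (a : ℝ) * d ≤ b * c + (a + b + c + d)) :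
    exp (-1 / 3) / (8 * √(2 * π)) * √(((a : ℝ) + c) / (a + b + c + d)) * √((b : ℝ) + d)
        / (a + b + c + d)
      ≤ a * d / (2 * (a + b) * (c + d)) * hypPMF (a + b + c + d) (a + b) (a + c) a := by
  have hp : 0 < hypPMF (a + b + c + d) (a + b) (a + c) a := by rw [hypPMF_table_eq]; positivity
  have hlogp := log_hypPMF_table_ge ha hb hc hd
  have hmi := scaledMutualInfo_le (a := a) (b := b) (c := c) (d := d) (by positivity)
    (by positivity) (by positivity) (by positivity) h₀ h₁
  have hcount := log_table_count_le (a := a) (b := b) (c := c) (d := d)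
    (mod_cast Nat.one_le_iff_ne_zero.2 ha) (mod_cast Nat.one_le_iff_ne_zero.2 hb)
    (mod_cast Nat.one_le_iff_ne_zero.2 hc) (mod_cast Nat.one_le_iff_ne_zero.2 hd) h₁
  have hπ := log_two_mul_pi_gt
  have h2 := log_two_gt_d9
  set N : ℝ := a + b + c + d
  set p := hypPMF (a + b + c + d) (a + b) (a + c) a
  have hN : 0 < N := by positivity
  have hL : log (exp (-1 / 3) / (8 * √(2 * π)) * √(((a : ℝ) + c) / N) * √((b : ℝ) + d) / N)
      = -1 / 3 - 3 * log 2 - log (2 * π) / 2 + (log ((a : ℝ) + c) - log N) / 2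
        + log ((b : ℝ) + d) / 2 - log N := by
    rw [log_div (by positivity) hN.ne', log_mul (by positivity) (by positivity),
      log_mul (by positivity) (by positivity), log_div (by positivity) (by positivity),
      log_exp, log_mul (by norm_num) (by positivity), log_sqrt (by positivity),
      log_sqrt (by positivity), log_sqrt (by positivity), log_div (by positivity) hN.ne',
      show (8 : ℝ) = 2 ^ 3 by norm_num, log_pow]
    push_cast
    ring
  have hR : log (a * d / (2 * (a + b) * (c + d)) * p)
      = log a + log d - log 2 - log ((a : ℝ) + b) - log ((c : ℝ) + d) + log p := by
    rw [log_mul (by positivity) hp.ne', log_div (by positivity) (by positivity),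
      log_mul (by positivity) (by positivity), log_mul (by positivity) (by positivity),
      log_mul (by positivity) (by positivity)]
    ring
  refine (log_le_log_iff (by positivity) (by positivity)).1 ?_
  rw [hL, hR]
  linarith

lemma hypMAD_table_ge {a b c d : ℕ} (ha : a ≠ 0) (hb : b ≠ 0) (hc : c ≠ 0) (hd : d ≠ 0)
    (h₀ : (b : ℝ) * c ≤ a * d) (h₁ : (a : ℝ) * d ≤ b * c + (a + b + c + d)) :
    exp (-1 / 3) / (8 * √(2 * π)) * √(((a : ℝ) + c) / (a + b + c + d)) * √((b : ℝ) + d)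
        / (a + b + c + d)
      ≤ ((a : ℝ) + b + c + d) / (2 * (a + b) * (c + d))
        * hypMAD (a + b + c + d) (a + b) (a + c) := by
  have hmad : a * d / ((a : ℝ) + b + c + d) * hypPMF (a + b + c + d) (a + b) (a + c) a
      ≤ hypMAD (a + b + c + d) (a + b) (a + c) := by
    convert mul_hypPMF_le_hypMAD (n := a + b + c + d) (i := a + b) (k := a + c) (M := a)
      (by omega) (by omega) (by omega) using 3 <;> push_cast <;> ring
  calc _ ≤ a * d / (2 * (a + b) * (c + d)) * hypPMF (a + b + c + d) (a + b) (a + c) a :=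
        le_mul_hypPMF_table ha hb hc hd h₀ h₁
    _ = ((a : ℝ) + b + c + d) / (2 * (a + b) * (c + d))
          * (a * d / ((a : ℝ) + b + c + d) * hypPMF (a + b + c + d) (a + b) (a + c) a) := by
        field_simp
    _ ≤ _ := by gcongr

theorem hyp_mad_lower_bound_middle_general
    (n i k m : ℕ)
    (hm : m ∈ Finset.Icc 2 (min i k - 1))
    (hmean₁ : (m : ℝ) - 1 ≤ (i : ℝ) * k / n) (hmean₂ : (i : ℝ) * k / n ≤ m) :
    Real.exp (-1/3) / (8 * Real.sqrt (2 * Real.pi))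
        * Real.sqrt ((k : ℝ) / n) * Real.sqrt ((n : ℝ) - k) / n
      ≤ (n : ℝ) / (2 * i * ((n : ℝ) - i)) * hypMAD n i k := by
  rw [Finset.mem_Icc] at hm
  obtain ⟨b, rfl⟩ : ∃ b, i = m + b := ⟨i - m, by omega⟩
  obtain ⟨c, rfl⟩ : ∃ c, k = m + c := ⟨k - m, by omega⟩
  have hm₂ : (2 : ℝ) ≤ m := mod_cast hm.1
  have hb : (1 : ℝ) ≤ b := mod_cast (show 1 ≤ b by omega)
  have hc : (1 : ℝ) ≤ c := mod_cast (show 1 ≤ c by omega)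
  have hn : (0 : ℝ) < n := by
    rcases Nat.eq_zero_or_pos n with rfl | h
    · simp at hmean₁; linarith
    · exact_mod_cast h
  rw [le_div_iff₀ hn] at hmean₁
  rw [div_le_iff₀ hn] at hmean₂
  push_cast at hmean₁ hmean₂
  have hlt : m + b + c < n := by
    have : (m : ℝ) + b + c < n := by nlinarith
    exact_mod_cast this
  obtain ⟨d, hd, rfl⟩ : ∃ d, d ≠ 0 ∧ n = m + b + c + d := ⟨n - (m + b + c), by omega, by omega⟩
  push_cast at hmean₁ hmean₂ ⊢
  rw [show (m : ℝ) + b + c + d - (m + c) = b + d by ring,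
    show (m : ℝ) + b + c + d - (m + b) = c + d by ring]
  exact hypMAD_table_ge (by omega) (by omega) (by omega) hd (by nlinarith) (by nlinarith)

/-- Lower bound on the scaled mean absolute deviation of a hypergeometric random
variable when its mean is neither too small nor too large. -/
theorem hyp_mad_lower_bound_middle
    (n i k m : ℕ) (hn : 2 ≤ n)
    (hi : i ∈ Finset.Icc 1 (n - 1)) (hk : k ∈ Finset.Icc 1 (n - 1))
    (hm : m ∈ Finset.Icc 2 (min i k - 1))
    (hmean₁ : (m : ℝ) - 1 ≤ (i : ℝ) * k / n) (hmean₂ : (i : ℝ) * k / n ≤ m) :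
    Real.exp (-1/3) / (8 * Real.sqrt (2 * Real.pi))
        * Real.sqrt ((k : ℝ) / n) * Real.sqrt ((n : ℝ) - k) / n
      ≤ (n : ℝ) / (2 * i * ((n : ℝ) - i)) * hypMAD n i k :=
  hyp_mad_lower_bound_middle_general n i k m hm hmean₁ hmean₂
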